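/- arXiv:1506.03859 — 2 statements merged into one kernel-verified Lean document; each statement's English description precedes it below -/
import Mathlib

section
/- Let $S$ be the inverse system $\mathbb{Z} \xleftarrow{\times 3} \mathbb{Z} \xleftarrow{\times 3} \cdots$. Then $\varprojlim^1 S$ is uncountable. -/
/-!
Send a set `s ⊆ ℕ` to the class of its indicator sequence. If two indicators differ by `Ψ x`,
then `|xᵢ - 3 xᵢ₊₁| ≤ 1` for all `i`, which forces `|xᵢ₊₁| < |xᵢ|` as long as `xᵢ ≠ 0` and
`xᵢ₊₁ = 0` once `xᵢ = 0`; so `x`, and hence the difference of the indicators, vanishes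
eventually. Each fibre of `s ↦ [1_s]` thus lies in the countable set of finite modifications of
one set, while `Set ℕ` is uncountable.
-/

/-- The map `Ψ((gᵢ)) = (gᵢ - 3 g_{i+1})` for the inverse system `ℤ ←×3- ℤ ←⋯`. -/
def psi : (ℕ → ℤ) →+ (ℕ → ℤ) :=
  AddMonoidHom.mk' (fun g i => g i - 3 * g (i + 1)) (by
    intro a b; funext i; simp [Pi.add_apply]; ring)

open Set
open scoped symmDiff

lemma eq_zero_or_abs_lt_of_abs_sub_mul_le_one {m a b : ℤ} (hm : 3 ≤ |m|)
    (h : |a - m * b| ≤ 1) : b = 0 ∨ |b| < |a| := by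
  refine or_iff_not_imp_left.mpr fun hb => ?_
  have hb1 : 1 ≤ |b| := Int.one_le_abs hb
  have hmb : |m| * |b| ≤ |a| + 1 := by
    rw [← abs_mul]
    linarith [abs_sub_abs_le_abs_sub (m * b) a, abs_sub_comm (m * b) a]
  nlinarith

lemma eq_zero_of_abs_sub_mul_le_one {m : ℤ} (hm : 3 ≤ |m|) {x : ℕ → ℤ}
    (hx : ∀ i, |x i - m * x (i + 1)| ≤ 1) {n : ℕ} (hn : (x 0).natAbs ≤ n) : x n = 0 := by
  have decay : ∀ k, x k = 0 ∨ |x k| + k ≤ |x 0| := by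
    intro k
    induction k with
    | zero => simp
    | succ k ih =>
      rcases eq_zero_or_abs_lt_of_abs_sub_mul_le_one hm (hx k) with h | h
      · exact .inl h
      · rcases ih with h' | h'
        · rw [h', abs_zero] at h
          exact absurd h (abs_nonneg _).not_gt
        · right; push_cast; linarith
  rcases decay n with h | h
  · exact h
  · have : (n : ℤ) ≥ |x 0| := by rw [Int.abs_eq_natAbs]; exact_mod_cast hn
    exact abs_nonpos_iff.mp (by linarith)

lemma psi_apply (g : ℕ → ℤ) (i : ℕ) : psi g i = g i - 3 * g (i + 1) := rfl

lemma finite_support_of_mem_range_psi {g : ℕ → ℤ} (hg : g ∈ psi.range)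
    (hbound : ∀ i, |g i| ≤ 1) : (Function.support g).Finite := by
  obtain ⟨x, rfl⟩ := hg
  have hx : ∀ i, |x i - 3 * x (i + 1)| ≤ 1 := hbound
  refine (finite_Iio (x 0).natAbs).subset fun n hn => mem_Iio.mpr <| not_le.mp fun hn' => hn ?_
  rw [psi_apply, eq_zero_of_abs_sub_mul_le_one (by norm_num) hx hn',
    eq_zero_of_abs_sub_mul_le_one (by norm_num) hx (hn'.trans n.le_succ), mul_zero, sub_zero]

lemma support_indicator_one_sub_indicator_one {α : Type*} (s t : Set α) :
    Function.support (s.indicator 1 - t.indicator 1 : α → ℤ) = s ∆ t := by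
  ext a
  by_cases hs : a ∈ s <;> by_cases ht : a ∈ t <;> simp [hs, ht, mem_symmDiff]

lemma abs_indicator_one_sub_indicator_one_le {α : Type*} (s t : Set α) (a : α) :
    |(s.indicator 1 - t.indicator 1 : α → ℤ) a| ≤ 1 := by
  by_cases hs : a ∈ s <;> by_cases ht : a ∈ t <;> simp [hs, ht]

lemma countable_setOf_finite_symmDiff {α : Type*} [Countable α] (s : Set α) :
    {t : Set α | (t ∆ s).Finite}.Countable :=
  Set.Countable.ofPred_finite.preimage (symmDiff_left_injective s)

lemma countable_of_countable_fibers {α β : Type*} [Countable β] (f : α → β)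
    (hf : ∀ a, (f ⁻¹' {f a}).Countable) : Countable α := by
  have hfib : ∀ b, (f ⁻¹' {b}).Countable := by
    intro b
    rcases (f ⁻¹' {b}).eq_empty_or_nonempty with h | ⟨a, rfl⟩
    · simp [h]
    · exact hf a
  exact countable_univ_iff.mp <|
    (countable_iUnion hfib).mono fun a _ => mem_iUnion.mpr ⟨f a, rfl⟩

lemma not_countable_set_nat : ¬ Countable (Set ℕ) := fun h =>
  let ⟨g, hg⟩ := h.exists_injective_nat
  Function.cantor_injective g hg

/-- `lim¹` of the inverse system `ℤ ←×3- ℤ ←⋯`, i.e. the cokernel of `Ψ`,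
is uncountable. -/
theorem stmt_2 : ¬ Countable ((ℕ → ℤ) ⧸ psi.range) := by
  intro hQ
  let cls : Set ℕ → (ℕ → ℤ) ⧸ psi.range := fun s => QuotientAddGroup.mk (s.indicator 1)
  refine not_countable_set_nat (countable_of_countable_fibers cls fun s => ?_)
  refine (countable_setOf_finite_symmDiff s).mono fun t ht => ?_
  have hmem : (t.indicator 1 - s.indicator 1 : ℕ → ℤ) ∈ psi.range :=
    QuotientAddGroup.eq_iff_sub_mem.mp ht
  show (t ∆ s).Finite
  rw [← support_indicator_one_sub_indicator_one]
  exact finite_support_of_mem_range_psi hmem (abs_indicator_one_sub_indicator_one_le t s)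
end

section
/- (Gray's dichotomy) Let $(G_i, f_{i+1,i})$ be an inverse system of countable abelian groups indexed by $\mathbb{N}$. Then $\varprojlim^1 G_i$ is either trivial or uncountable. -/
/-!
If `lim¹` is countable, the images `im_k = im(G_{i+k} → G_i)` stabilise for every `i`:
otherwise they drop at infinitely many `k ∈ D`; choosing `t_k ∈ im_k \ im_{k+1}` and, for each
`S ⊆ D`, a sequence `d_S` whose partial sums `∑_{j<K} f(d_S(i+j))` equal `∑_{k<K, k∈S} t_k`,
two `d_S` with the same class differ by some `Ψ h`, so their partial sums agree modulo `im_K`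
up to the single element `h_i`. Hence each fibre of `S ↦ [d_S]` injects into `G_i`, and the
uncountable set `2^D` would be countable.
Conversely, for such a Mittag-Leffler system `Ψ` is onto: a preimage of `g` is built one
coordinate at a time inside the sets `{y | ∀ k, y ≡ ∑_{j<k} f(g(i+j)) mod im_k}`, which
stability makes nonempty and liftable along `f_i`.
-/

/-- The map `Ψ((gᵢ)) = (gᵢ - fᵢ(g_{i+1}))` of an inverse system of abelian
groups indexed by `ℕ`; its cokernel is `lim¹`. -/
def Psi {G : ℕ → Type*} [∀ i, AddCommGroup (G i)] (f : ∀ i, G (i + 1) →+ G i) :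
    (∀ i, G i) →+ (∀ i, G i) :=
  AddMonoidHom.mk' (fun g i => g i - f i (g (i + 1))) (by
    intro a b; funext i; simp [Pi.add_apply, map_add]; abel)

theorem not_countable_set_of_infinite (α : Type*) [Infinite α] : ¬ Countable (Set α) := by
  rw [← Cardinal.mk_le_aleph0_iff, Cardinal.mk_set, not_le]
  exact (Cardinal.infinite_iff.mp ‹_›).trans_lt (Cardinal.cantor _)

theorem exists_seq_of_forall_exists {α : ℕ → Type*} (P : ∀ i, α i → Prop)
    (R : ∀ i, α i → α (i + 1) → Prop) (a : α 0) (ha : P 0 a)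
    (h : ∀ i a, P i a → ∃ b, P (i + 1) b ∧ R i a b) :
    ∃ s : ∀ i, α i, s 0 = a ∧ ∀ i, R i (s i) (s (i + 1)) := by
  choose step hstep hR using h
  let s : ∀ i, {a // P i a} := fun i =>
    Nat.rec ⟨a, ha⟩ (fun i b => ⟨step i b b.2, hstep i b b.2⟩) i
  exact ⟨fun i => (s i).1, rfl, fun i => hR i _ _⟩

theorem exists_forall_add_eq {G : ℕ → Type*} [∀ i, Zero (G i)] (i₀ : ℕ) (e : ∀ n, G (i₀ + n)) :
    ∃ d : ∀ j, G j, ∀ n, d (i₀ + n) = e n := by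
  have cast_e : ∀ m n, m = n → ∀ h : G (i₀ + m) = G (i₀ + n), cast h (e m) = e n := by
    rintro m n rfl h; rfl
  refine ⟨fun j => if h : i₀ ≤ j then cast (congrArg G (Nat.add_sub_cancel' h)) (e (j - i₀))
    else 0, fun n => ?_⟩
  dsimp only
  rw [dif_pos (Nat.le_add_right i₀ n)]
  exact cast_e _ _ (Nat.add_sub_cancel_left ..) _

theorem eq_of_sum_indicator_sub_mem {A : Type*} [AddCommGroup A] {H : ℕ → AddSubgroup A}
    {t : ℕ → A} {S S' : Set ℕ} (hS : ∀ k ∈ S, t k ∉ H (k + 1)) (hS' : ∀ k ∈ S', t k ∉ H (k + 1))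
    (h : ∀ K, ∑ k ∈ Finset.range K, S.indicator t k - ∑ k ∈ Finset.range K, S'.indicator t k
      ∈ H K) : S = S' := by
  ext k
  induction k using Nat.strong_induction_on with
  | _ k ih =>
    have hk : S.indicator t k - S'.indicator t k ∈ H (k + 1) := by
      have hsum : ∑ j ∈ Finset.range k, S.indicator t j = ∑ j ∈ Finset.range k, S'.indicator t j :=
        Finset.sum_congr rfl fun j hj =>
          Set.indicator_eq_indicator (ih j (Finset.mem_range.mp hj)) rfl
      simpa only [Finset.sum_range_succ, hsum, add_sub_add_left_eq_sub] using h (k + 1)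
    by_cases hkS : k ∈ S <;> by_cases hkS' : k ∈ S' <;>
      simp only [hkS, hkS', Set.indicator_of_mem, Set.indicator_of_notMem, not_false_eq_true,
        sub_zero, zero_sub, neg_mem_iff] at hk ⊢
    · exact absurd hk (hS k hkS)
    · exact absurd hk (hS' k hkS')

namespace Lim1

variable {G : ℕ → Type*} [∀ i, AddCommGroup (G i)] (f : ∀ i, G (i + 1) →+ G i)

/-- `image f k i` is the image of `G (i + k)` in `G i`. -/
def image : ℕ → ∀ i, AddSubgroup (G i)
  | 0, _ => ⊤
  | k + 1, i => (image k (i + 1)).map (f i)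

/-- `partialSum f k i d` is the sum over `j < k` of the images of `d (i + j)` in `G i`. -/
def partialSum : ℕ → ∀ i, (∀ j, G j) →+ G i
  | 0, _ => 0
  | k + 1, i => Pi.evalAddMonoidHom G i + (f i).comp (partialSum k (i + 1))

def IsMittagLeffler : Prop :=
  ∀ i, ∃ N, ∀ k, N ≤ k → image f k i = image f N i

variable {f}

@[simp]
theorem psi_apply (d : ∀ j, G j) (i : ℕ) : Psi f d i = d i - f i (d (i + 1)) := rfl

theorem partialSum_succ_apply (k i : ℕ) (d : ∀ j, G j) :
    partialSum f (k + 1) i d = d i + f i (partialSum f k (i + 1) d) := rfl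

theorem image_succ_le (k i : ℕ) : image f (k + 1) i ≤ image f k i := by
  induction k generalizing i with
  | zero => exact le_top
  | succ k ih => exact AddSubgroup.map_mono (ih (i + 1))

theorem image_antitone (i : ℕ) : Antitone (image f · i) :=
  antitone_nat_of_succ_le (image_succ_le · i)

theorem partialSum_sub_mem_image (d : ∀ j, G j) {k l : ℕ} (hkl : k ≤ l) (i : ℕ) :
    partialSum f l i d - partialSum f k i d ∈ image f k i := by
  induction k generalizing i l with
  | zero => exact AddSubgroup.mem_top _
  | succ k ih =>
    obtain ⟨l, rfl⟩ : ∃ l', l = l' + 1 := ⟨l - 1, by omega⟩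
    rw [partialSum_succ_apply, partialSum_succ_apply, add_sub_add_left_eq_sub, ← map_sub]
    exact AddSubgroup.mem_map_of_mem _ (ih (by omega) (i + 1))

theorem sub_partialSum_psi_mem_image (h : ∀ j, G j) (K i : ℕ) :
    h i - partialSum f K i (Psi f h) ∈ image f K i := by
  induction K generalizing i with
  | zero => exact AddSubgroup.mem_top _
  | succ K ih =>
    have : h i - partialSum f (K + 1) i (Psi f h)
        = f i (h (i + 1) - partialSum f K (i + 1) (Psi f h)) := by
      rw [partialSum_succ_apply, psi_apply, map_sub]; abel
    rw [this]
    exact AddSubgroup.mem_map_of_mem _ (ih (i + 1))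

section Surjective

variable {g : ∀ j, G j} {i N : ℕ}

theorem partialSum_add_sub_mem_image (hN : ∀ k, N ≤ k → image f k i = image f N i)
    {x : G i} (hx : x ∈ image f N i) (k : ℕ) :
    partialSum f N i g + x - partialSum f k i g ∈ image f k i := by
  rw [add_sub_right_comm]
  rcases le_total k N with hkN | hNk
  · exact add_mem (partialSum_sub_mem_image g hkN i) (image_antitone i hkN hx)
  · rw [hN k hNk, ← neg_sub]
    exact add_mem (neg_mem (partialSum_sub_mem_image g hNk i)) hx

theorem exists_lift (hN : ∀ k, N ≤ k → image f k (i + 1) = image f N (i + 1)) {y : G i}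
    (hy : ∀ k, y - partialSum f k i g ∈ image f k i) :
    ∃ z, (∀ k, z - partialSum f k (i + 1) g ∈ image f k (i + 1)) ∧ y = g i + f i z := by
  obtain ⟨x, hx, hfx⟩ := AddSubgroup.mem_map.mp (hy (N + 1))
  refine ⟨partialSum f N (i + 1) g + x, partialSum_add_sub_mem_image hN hx, ?_⟩
  rw [map_add, hfx, partialSum_succ_apply]
  abel

end Surjective

theorem psi_surjective (hf : IsMittagLeffler f) : Function.Surjective (Psi f) := by
  intro g
  choose N hN using hf
  obtain ⟨h, -, hh⟩ := exists_seq_of_forall_exists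
    (fun i y => ∀ k, y - partialSum f k i g ∈ image f k i) (fun i y z => y = g i + f i z)
    (partialSum f (N 0) 0 g + 0) (partialSum_add_sub_mem_image (hN 0) (zero_mem _))
    (fun i _ hy => exists_lift (hN (i + 1)) hy)
  exact ⟨h, funext fun i => by rw [psi_apply, hh i, add_sub_cancel_right]⟩

theorem exists_partialSum_eq {i₀ : ℕ} {s : ℕ → G i₀} (hs : ∀ k, s k ∈ image f k i₀) :
    ∃ d : ∀ j, G j, ∀ K, partialSum f K i₀ d = ∑ k ∈ Finset.range K, s k := by
  have lift (n : ℕ) (σ : ℕ → G (i₀ + n)) (hσ : ∀ k, σ k ∈ image f k (i₀ + n)) :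
      ∃ σ' : ℕ → G (i₀ + (n + 1)), (∀ k, σ' k ∈ image f k (i₀ + (n + 1))) ∧
        ∀ k, σ (k + 1) = f (i₀ + n) (σ' k) := by
    choose σ' hσ' hσσ' using fun k => AddSubgroup.mem_map.mp (hσ (k + 1))
    exact ⟨σ', hσ', fun k => (hσσ' k).symm⟩
  obtain ⟨σ, rfl, hσ⟩ := exists_seq_of_forall_exists (α := fun n => ℕ → G (i₀ + n))
    (fun n σ => ∀ k, σ k ∈ image f k (i₀ + n))
    (fun n σ σ' => ∀ k, σ (k + 1) = f (i₀ + n) (σ' k)) s hs lift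
  obtain ⟨d, hd⟩ := exists_forall_add_eq i₀ (fun n => σ n 0)
  suffices h : ∀ K n, partialSum f K (i₀ + n) d = ∑ k ∈ Finset.range K, σ n k from
    ⟨d, fun K => h K 0⟩
  intro K
  induction K with
  | zero => exact fun _ => rfl
  | succ K ih =>
    intro n
    rw [partialSum_succ_apply, Finset.sum_range_succ', hd, add_comm _ (σ n 0)]
    simp only [hσ n]
    rw [← map_sum, ← ih (n + 1)]
    rfl

theorem exists_stable_of_finite {i : ℕ} (h : {k | image f (k + 1) i ≠ image f k i}.Finite) :
    ∃ N, ∀ k, N ≤ k → image f k i = image f N i := by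
  obtain ⟨N, hN⟩ := h.bddAbove
  refine ⟨N + 1, fun k hk => ?_⟩
  induction k, hk using Nat.le_induction with
  | base => rfl
  | succ k hk ih =>
    rw [← ih]
    by_contra hne
    exact absurd (hN hne) (by omega)

theorem exists_sub_partialSum_mem_image {d d' : ∀ j, G j}
    (h : (d : (∀ j, G j) ⧸ (Psi f).range) = d') (i : ℕ) :
    ∃ c : G i, ∀ K, c - (partialSum f K i d' - partialSum f K i d) ∈ image f K i := by
  obtain ⟨e, he⟩ := QuotientAddGroup.eq.mp h
  refine ⟨e i, fun K => ?_⟩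
  simpa only [he, neg_add_eq_sub, map_sub] using sub_partialSum_psi_mem_image (f := f) e K i

theorem countable_fiber [∀ j, Countable (G j)] {X : Type*} (d : X → ∀ j, G j) (i : ℕ)
    (hd : ∀ x x', (∀ K, partialSum f K i (d x) - partialSum f K i (d x') ∈ image f K i) →
      x = x')
    (q : (∀ j, G j) ⧸ (Psi f).range) :
    ((fun x => (d x : (∀ j, G j) ⧸ (Psi f).range)) ⁻¹' {q}).Countable := by
  rcases Set.eq_empty_or_nonempty ((fun x => (d x : (∀ j, G j) ⧸ (Psi f).range)) ⁻¹' {q})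
    with h | ⟨x₀, hx₀⟩
  · simp only [h, Set.countable_empty]
  choose! c hc using fun x (hx : (d x : (∀ j, G j) ⧸ (Psi f).range) = q) =>
    exists_sub_partialSum_mem_image (hx₀.trans hx.symm) i
  refine (Set.mapsTo_univ c _).countable_of_injOn (fun x hx x' hx' hcx => hd x x' fun K => ?_)
    Set.countable_univ
  have := sub_mem (hc x' hx' K) (hc x hx K)
  rwa [hcx, sub_sub_sub_cancel_left, sub_sub_sub_cancel_right] at this

theorem isMittagLeffler_of_countable [∀ j, Countable (G j)]
    (hQ : Countable ((∀ j, G j) ⧸ (Psi f).range)) : IsMittagLeffler f := by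
  classical
  intro i
  by_contra hst
  set D := {k | image f (k + 1) i ≠ image f k i}
  have hD : D.Infinite := fun hfin => hst (exists_stable_of_finite hfin)
  have := hD.to_subtype
  choose t ht_mem ht using fun k => show ∃ x ∈ image f k i, k ∈ D → x ∉ image f (k + 1) i from
    if hk : k ∈ D then
      (SetLike.exists_of_lt (lt_of_le_of_ne (image_succ_le k i) hk)).imp fun _ hx =>
        ⟨hx.1, fun _ => hx.2⟩
    else ⟨0, zero_mem _, fun h => absurd h hk⟩
  have htD : ∀ S : Set D, ∀ k ∈ Subtype.val '' S, t k ∉ image f (k + 1) i := by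
    rintro S _ ⟨k, -, rfl⟩
    exact ht k k.2
  choose d hd using fun S : Set D => exists_partialSum_eq (f := f)
    (s := (Subtype.val '' S).indicator t) fun k => by
      rw [Set.indicator_apply]; split_ifs; exacts [ht_mem k, zero_mem _]
  refine not_countable_set_of_infinite D (Set.Countable.of_preimage_singleton
    (countable_fiber (f := f) d i fun S S' hSS' => Subtype.val_injective.image_injective ?_))
  refine eq_of_sum_indicator_sub_mem (H := (image f · i)) (htD S) (htD S') fun K => ?_
  simpa only [hd] using hSS' K

end Lim1

/-- Gray's dichotomy: for an inverse system of countable abelian groups indexed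
by `ℕ`, the derived limit `lim¹ = coker Ψ` is either trivial or uncountable. -/
theorem stmt_3 {G : ℕ → Type*} [∀ i, AddCommGroup (G i)] [∀ i, Countable (G i)]
    (f : ∀ i, G (i + 1) →+ G i) :
    Subsingleton ((∀ i, G i) ⧸ (Psi f).range) ∨
      ¬ Countable ((∀ i, G i) ⧸ (Psi f).range) := by
  by_cases hQ : Countable ((∀ i, G i) ⧸ (Psi f).range)
  · left
    rw [AddMonoidHom.range_eq_top.mpr
      (Lim1.psi_surjective (Lim1.isMittagLeffler_of_countable hQ))]
    exact QuotientAddGroup.subsingleton_quotient_top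
  · exact Or.inr hQ
end
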